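/- arXiv:2402.15020 — 6 statements merged into one kernel-verified Lean document; each statement's English description precedes it below -/
import Mathlib

section
/- (Hammersley–Clifford–Besag) Let p be a probability distribution with full support on A^n. Then for any two sequences x, y ∈ A^n, p(x)/p(y) = ∏_{i=1}^n p(x_i | x_{<i}, y_{>i}) / p(y_i | x_{<i}, y_{>i}). -/
/-- The hybrid conditional `p(a | x_{<i}, y_{>i})`: the conditional probability that the
`i`-th coordinate equals `a`, given that coordinate `j` equals `x j` for all `j < i` and
coordinate `j` equals `y j` for all `j > i`. -/
noncomputable def hybridCond {A : Type*} [Fintype A] [DecidableEq A] {n : ℕ}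
    (p : (Fin n → A) → ℝ) (x y : Fin n → A) (i : Fin n) (a : A) : ℝ :=
  (∑ w : Fin n → A,
      if w i = a ∧ (∀ j, j < i → w j = x j) ∧ (∀ j, i < j → w j = y j) then p w else 0) /
  (∑ w : Fin n → A,
      if (∀ j, j < i → w j = x j) ∧ (∀ j, i < j → w j = y j) then p w else 0)

/-- **Hammersley–Clifford–Besag.** For a probability distribution `p` with full support on
`A^n` and any two sequences `x, y ∈ A^n`,
`p(x)/p(y) = ∏_{i=1}^n p(x_i | x_{<i}, y_{>i}) / p(y_i | x_{<i}, y_{>i})`. -/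
theorem hammersley_clifford_besag
    {A : Type*} [Fintype A] [DecidableEq A] [Nonempty A] {n : ℕ} (hn : 1 ≤ n)
    (p : (Fin n → A) → ℝ)
    (hsum : ∑ w : Fin n → A, p w = 1) (hpos : ∀ w, 0 < p w)
    (x y : Fin n → A) :
    p x / p y = ∏ i : Fin n, hybridCond p x y i (x i) / hybridCond p x y i (y i) := by
  classical
  set f : ℕ → ℝ := fun k => p (fun j => if (j : ℕ) < k then x j else y j) with hf
  have hfpos : ∀ k, 0 < f k := fun k => hpos _
  have key : ∀ i : Fin n, hybridCond p x y i (x i) / hybridCond p x y i (y i)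
      = f ((i : ℕ) + 1) / f (i : ℕ) := by
    intro i
    set g : A → (Fin n → A) := fun a j =>
      if j < i then x j else if j = i then a else y j with hg
    have hgcond : ∀ a (w : Fin n → A),
        (w i = a ∧ (∀ j, j < i → w j = x j) ∧ (∀ j, i < j → w j = y j)) ↔ w = g a := by
      intro a w
      constructor
      · rintro ⟨h1, h2, h3⟩
        funext j
        rcases lt_trichotomy j i with h | h | h
        · simp [hg, h, h2 j h]
        · simp [hg, h, h1]
        · simp [hg, not_lt_of_gt h, (ne_of_gt h), h3 j h]
      · rintro rfl
        refine ⟨by simp [hg], fun j hj => by simp [hg, hj], fun j hj => by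
          simp [hg, not_lt_of_gt hj, (ne_of_gt hj)]⟩
    have num : ∀ a : A,
        (∑ w : Fin n → A,
          if w i = a ∧ (∀ j, j < i → w j = x j) ∧ (∀ j, i < j → w j = y j) then p w else 0)
        = p (g a) := by
      intro a
      rw [Finset.sum_eq_single (g a)]
      · rw [if_pos ((hgcond a (g a)).mpr rfl)]
      · intro w _ hw
        rw [if_neg]
        exact fun h => hw ((hgcond a w).mp h)
      · intro h; exact absurd (Finset.mem_univ _) h
    set D : ℝ := ∑ w : Fin n → A,
        if (∀ j, j < i → w j = x j) ∧ (∀ j, i < j → w j = y j) then p w else 0 with hD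
    have hDpos : 0 < D := by
      have h1 : p (g (x i)) ≤ D := by
        rw [hD]
        have := Finset.single_le_sum (f := fun w : Fin n → A =>
          if (∀ j, j < i → w j = x j) ∧ (∀ j, i < j → w j = y j) then p w else 0)
          (fun w _ => by split
                         · exact le_of_lt (hpos w)
                         · exact le_rfl)
          (Finset.mem_univ (g (x i)))
        simpa only [if_pos ((hgcond (x i) (g (x i))).mpr rfl).2] using this
      exact lt_of_lt_of_le (hpos _) h1
    have hgx : g (x i) = fun j : Fin n => if (j : ℕ) < (i : ℕ) + 1 then x j else y j := by
      funext j
      rcases lt_trichotomy j i with h | h | h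
      · simp [hg, h, Nat.lt_succ_of_lt h]
      · simp [hg, h, Nat.lt_succ_self]
      · have : ¬ ((j : ℕ) < (i : ℕ) + 1) := by
          simpa [Nat.lt_succ_iff] using not_le_of_gt (show (i : ℕ) < (j : ℕ) from h)
        simp [hg, not_lt_of_gt h, (ne_of_gt h), this]
    have hgy : g (y i) = fun j : Fin n => if (j : ℕ) < (i : ℕ) then x j else y j := by
      funext j
      rcases lt_trichotomy j i with h | h | h
      · simp [hg, h]
      · simp [hg, h, lt_irrefl]
      · simp [hg, not_lt_of_gt h, (ne_of_gt h),
          not_lt_of_gt (show (i : ℕ) < (j : ℕ) from h)]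
    have e1 : hybridCond p x y i (x i) = p (g (x i)) / D := by
      rw [hybridCond, num, hD]
    have e2 : hybridCond p x y i (y i) = p (g (y i)) / D := by
      rw [hybridCond, num, hD]
    rw [e1, e2, hgx, hgy]
    have hD0 : D ≠ 0 := ne_of_gt hDpos
    have h1 : f ((i : ℕ)) ≠ 0 := (hfpos _).ne'
    show f ((i : ℕ) + 1) / D / (f (i : ℕ) / D) = f ((i : ℕ) + 1) / f (i : ℕ)
    field_simp
  rw [Finset.prod_congr rfl (fun i _ => key i)]
  have hprod : ∏ i : Fin n, f ((i : ℕ) + 1) / f (i : ℕ)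
      = ∏ k ∈ Finset.range n, f (k + 1) / f k :=
    Fin.prod_univ_eq_prod_range (fun k => f (k + 1) / f k) n
  rw [hprod]
  have tele : ∀ m : ℕ, ∏ k ∈ Finset.range m, f (k + 1) / f k = f m / f 0 := by
    intro m
    induction m with
    | zero => simp [div_self (hfpos 0).ne']
    | succ m ih =>
        rw [Finset.prod_range_succ, ih, div_mul_div_comm, mul_comm,
          mul_div_mul_right _ _ (hfpos m).ne']
  rw [tele n]
  have hx : f n = p x := by
    simp only [hf]
    congr 1
    funext j
    simp [j.isLt]
  have hy : f 0 = p y := by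
    simp only [hf]
    congr 1
  rw [hx, hy]
end

section
/- (Pivot consistency of the HCB score) Let p be a probability distribution with full support on A^n, and for sequences x, y ∈ A^n define the HCB score S(x; y) = Σ_{i=1}^n ( log p(x_i | x_{<i}, y_{>i}) − log p(y_i | x_{<i}, y_{>i}) ). Then for any sequences x, x' and any two pivots y, y' ∈ A^n, S(x; y) − S(x'; y) = S(x; y') − S(x'; y'). In particular, the ordering of sequences x by their score S(x; y) is the ordering by p(x) and does not depend on the choice of pivot y. -/
/-- The HCB score of a sequence `x` with respect to a pivot `y`:
`S(x; y) = Σ_{i=1}^n (log p(x_i | x_{<i}, y_{>i}) − log p(y_i | x_{<i}, y_{>i}))`. -/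
noncomputable def hcbScore {A : Type*} [Fintype A] [DecidableEq A] {n : ℕ}
    (p : (Fin n → A) → ℝ) (x y : Fin n → A) : ℝ :=
  ∑ i : Fin n,
    (Real.log (hybridCond p x y i (x i)) - Real.log (hybridCond p x y i (y i)))


lemma sum_ite_eq_of_iff {A : Type*} [Fintype A] [DecidableEq A] {n : ℕ}
    (p : (Fin n → A) → ℝ) (v : Fin n → A) (C : (Fin n → A) → Prop) [DecidablePred C]
    (hC : ∀ w, C w ↔ w = v) :
    (∑ w : Fin n → A, if C w then p w else 0) = p v := by
  rw [Finset.sum_congr rfl (fun w _ => if_congr (hC w) rfl rfl)]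
  simp

lemma hcbScore_eq {A : Type*} [Fintype A] [DecidableEq A] {n : ℕ}
    (p : (Fin n → A) → ℝ) (hpos : ∀ w, 0 < p w) (x y : Fin n → A) :
    (∑ i : Fin n,
      (Real.log ((∑ w : Fin n → A,
      if w i = x i ∧ (∀ j, j < i → w j = x j) ∧ (∀ j, i < j → w j = y j) then p w else 0) /
  (∑ w : Fin n → A,
      if (∀ j, j < i → w j = x j) ∧ (∀ j, i < j → w j = y j) then p w else 0))
       - Real.log ((∑ w : Fin n → A,
      if w i = y i ∧ (∀ j, j < i → w j = x j) ∧ (∀ j, i < j → w j = y j) then p w else 0) /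
  (∑ w : Fin n → A,
      if (∀ j, j < i → w j = x j) ∧ (∀ j, i < j → w j = y j) then p w else 0))))
    = Real.log (p x) - Real.log (p y) := by
  set z : ℕ → Fin n → A := fun k j => if (j : ℕ) < k then x j else y j with hz
  have hzx : ∀ i : Fin n, ∀ w : Fin n → A,
      (w i = x i ∧ (∀ j, j < i → w j = x j) ∧ (∀ j, i < j → w j = y j)) ↔ w = z ((i:ℕ) + 1) := by
    intro i w
    constructor
    · rintro ⟨h0, h1, h2⟩
      funext j
      simp only [hz]
      rcases lt_trichotomy (j : ℕ) (i : ℕ) with h | h | h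
      · rw [if_pos (by omega), h1 j (Fin.lt_def.mpr h)]
      · have : j = i := Fin.ext h
        rw [if_pos (by omega), this, h0]
      · rw [if_neg (by omega), h2 j (Fin.lt_def.mpr h)]
    · rintro rfl
      refine ⟨?_, fun j hj => ?_, fun j hj => ?_⟩
      · simp only [hz]; rw [if_pos (by omega)]
      · simp only [hz]; rw [if_pos (by have := Fin.lt_def.mp hj; omega)]
      · simp only [hz]; rw [if_neg (by have := Fin.lt_def.mp hj; omega)]
  have hzy : ∀ i : Fin n, ∀ w : Fin n → A,
      (w i = y i ∧ (∀ j, j < i → w j = x j) ∧ (∀ j, i < j → w j = y j)) ↔ w = z (i : ℕ) := by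
    intro i w
    constructor
    · rintro ⟨h0, h1, h2⟩
      funext j
      simp only [hz]
      rcases lt_trichotomy (j : ℕ) (i : ℕ) with h | h | h
      · rw [if_pos h, h1 j (Fin.lt_def.mpr h)]
      · have : j = i := Fin.ext h
        rw [if_neg (by omega), this, h0]
      · rw [if_neg (by omega), h2 j (Fin.lt_def.mpr h)]
    · rintro rfl
      refine ⟨?_, fun j hj => ?_, fun j hj => ?_⟩
      · simp only [hz]; rw [if_neg (by omega)]
      · simp only [hz]; rw [if_pos (Fin.lt_def.mp hj)]
      · simp only [hz]; rw [if_neg (by have := Fin.lt_def.mp hj; omega)]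
  have hterm : ∀ i : Fin n,
      (Real.log ((∑ w : Fin n → A,
        if w i = x i ∧ (∀ j, j < i → w j = x j) ∧ (∀ j, i < j → w j = y j) then p w else 0) /
        (∑ w : Fin n → A,
        if (∀ j, j < i → w j = x j) ∧ (∀ j, i < j → w j = y j) then p w else 0))
       - Real.log ((∑ w : Fin n → A,
        if w i = y i ∧ (∀ j, j < i → w j = x j) ∧ (∀ j, i < j → w j = y j) then p w else 0) /
        (∑ w : Fin n → A,
        if (∀ j, j < i → w j = x j) ∧ (∀ j, i < j → w j = y j) then p w else 0)))
      = Real.log (p (z ((i:ℕ) + 1))) - Real.log (p (z (i : ℕ))) := by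
    intro i
    have hNx := sum_ite_eq_of_iff p (z ((i:ℕ)+1)) _ (hzx i)
    have hNy := sum_ite_eq_of_iff p (z (i:ℕ)) _ (hzy i)
    have hDpos : 0 < ∑ w : Fin n → A,
        if (∀ j, j < i → w j = x j) ∧ (∀ j, i < j → w j = y j) then p w else 0 := by
      have hmem : (if (∀ j, j < i → (z ((i:ℕ)+1)) j = x j) ∧ (∀ j, i < j → (z ((i:ℕ)+1)) j = y j)
          then p (z ((i:ℕ)+1)) else 0) = p (z ((i:ℕ)+1)) := by
        rw [if_pos]
        exact ((hzx i (z ((i:ℕ)+1))).mpr rfl).2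
      calc (0:ℝ) < p (z ((i:ℕ)+1)) := hpos _
        _ ≤ _ := by
            rw [← hmem]
            exact Finset.single_le_sum (f := fun w => if (∀ j, j < i → w j = x j) ∧
              (∀ j, i < j → w j = y j) then p w else 0)
              (fun w _ => by split_ifs; exacts [(hpos w).le, le_rfl])
              (Finset.mem_univ _)
    rw [hNx, hNy, Real.log_div (ne_of_gt (hpos _)) (ne_of_gt hDpos),
      Real.log_div (ne_of_gt (hpos _)) (ne_of_gt hDpos)]
    ring
  rw [Finset.sum_congr rfl (fun i _ => hterm i)]
  rw [Fin.sum_univ_eq_sum_range (fun k => Real.log (p (z (k + 1))) - Real.log (p (z k))) n]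
  rw [Finset.sum_range_sub (fun k => Real.log (p (z k))) n]
  have h1 : z n = x := funext fun j => if_pos j.isLt
  have h2 : z 0 = y := funext fun j => if_neg (Nat.not_lt_zero _)
  rw [h1, h2]

lemma hcbScore_log {A : Type*} [Fintype A] [DecidableEq A] {n : ℕ}
    (p : (Fin n → A) → ℝ) (hpos : ∀ w, 0 < p w) (x y : Fin n → A) :
    hcbScore p x y = Real.log (p x) - Real.log (p y) := by
  unfold hcbScore hybridCond
  exact hcbScore_eq p hpos x y


/-- **Pivot consistency of the HCB score.** For a probability distribution `p` with full
support on `A^n`, any sequences `x, x'` and any two pivots `y, y'`,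
`S(x; y) − S(x'; y) = S(x; y') − S(x'; y')`; in particular, the ordering of sequences by
their score `S(·; y)` is the ordering by `p(·)` and does not depend on the pivot `y`. -/
theorem hcbScore_pivot_consistent
    {A : Type*} [Fintype A] [DecidableEq A] [Nonempty A] {n : ℕ} (hn : 1 ≤ n)
    (p : (Fin n → A) → ℝ)
    (hsum : ∑ w : Fin n → A, p w = 1) (hpos : ∀ w, 0 < p w)
    (x x' y y' : Fin n → A) :
    (hcbScore p x y - hcbScore p x' y = hcbScore p x y' - hcbScore p x' y') ∧
    (hcbScore p x y ≤ hcbScore p x' y ↔ p x ≤ p x') := by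
  rw [hcbScore_log p hpos x y, hcbScore_log p hpos x' y,
    hcbScore_log p hpos x y', hcbScore_log p hpos x' y']
  refine ⟨by ring, ?_⟩
  rw [sub_le_sub_iff_right, Real.log_le_log_iff (hpos x) (hpos x')]
end

section
/- (HCB for segment infilling) Let p be a probability distribution with full support on A^n, and let 1 ≤ j ≤ k ≤ n. Let x, x' ∈ A^n be two sequences that agree on all coordinates outside the window {j,…,k}, and let y ∈ A^n be any pivot sequence. Then the ratio of conditional probabilities of the two infilled segments given the common context satisfies p(x_{j:k} | x_{<j}, x_{>k}) / p(x'_{j:k} | x_{<j}, x_{>k}) = ∏_{i=j}^{k} [ p(x_i | x_{<i}, y_{i+1:k}, x_{>k}) / p(y_i | x_{<i}, y_{i+1:k}, x_{>k}) ] · [ p(y_i | x'_{<i}, y_{i+1:k}, x_{>k}) / p(x'_i | x'_{<i}, y_{i+1:k}, x_{>k}) ], where each factor is the hybrid conditional of p at coordinate i given the indicated values at all other coordinates (x-values before i inside the window and on the left context, y-values strictly between i and k inside the window, and the common values outside the window). -/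
/-!
Let `H_m` be the sequence equal to the pivot `y` on the coordinates `m ≤ t ≤ k` and to `x`
elsewhere, and `H'_m` the same with `x'`. Then `H_{k+1} = x`, `H'_{k+1} = x'`, and `H_j = H'_j`
because `x` and `x'` agree outside the window. The sequences `H_{i+1}` and `H_i` differ only at
coordinate `i`, where they carry `x i` and `y i`, so the normalizers of the site conditionals
cancel and the `i`-th factor equals `(p H_{i+1} / p H'_{i+1}) / (p H_i / p H'_i)`. The product
telescopes to `p x / p x'`, which is also the left-hand side once the common normalizer cancels.
-/

/-- The single-site conditional of `p` at coordinate `i`, given that every other coordinate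
`t ≠ i` takes the value `w t`: the probability of the full sequence with `a` at position `i`
divided by the sum over `b ∈ A` of the probabilities of the full sequences with `b` at
position `i`. -/
noncomputable def siteCond {A : Type*} [Fintype A] {n : ℕ}
    (p : (Fin n → A) → ℝ) (w : Fin n → A) (i : Fin n) (a : A) : ℝ :=
  p (Function.update w i a) / ∑ b : A, p (Function.update w i b)

theorem Fin.prod_Icc_div_of_ne_zero {G₀ : Type*} [CommGroupWithZero G₀] {n : ℕ} {j k : Fin n}
    (hjk : j ≤ k) (f : ℕ → G₀) (hf : ∀ i, f i ≠ 0) :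
    ∏ i ∈ Finset.Icc j k, f (i + 1) / f i = f (k + 1) / f j := by
  simpa using congrArg Units.val (prod_Icc_div hjk fun i : Fin (n + 1) => Units.mk0 (f i) (hf i))

theorem siteCond_div_siteCond {A : Type*} [Fintype A] {n : ℕ} {p : (Fin n → A) → ℝ}
    (hpos : ∀ w, 0 < p w) (w : Fin n → A) (i : Fin n) (a b : A) :
    siteCond p w i a / siteCond p w i b = p (Function.update w i a) / p (Function.update w i b) :=
  div_div_div_cancel_right₀ (Finset.sum_pos (fun _ _ => hpos _) ⟨a, Finset.mem_univ a⟩).ne' _ _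

def hybrid {A : Type*} {n : ℕ} (y z : Fin n → A) (m : ℕ) (k : Fin n) : Fin n → A :=
  fun t => if m ≤ (t : ℕ) ∧ t ≤ k then y t else z t

section hybrid

variable {A : Type*} {n : ℕ} (y z : Fin n → A)

theorem hybrid_succ (i k : Fin n) :
    hybrid y z (i + 1) k = fun t => if i < t ∧ t ≤ k then y t else z t :=
  rfl

theorem update_hybrid_succ_self (i k : Fin n) :
    Function.update (hybrid y z (i + 1) k) i (z i) = hybrid y z (i + 1) k := by
  rw [show z i = hybrid y z (i + 1) k i by simp [hybrid], Function.update_eq_self]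

theorem update_hybrid_succ_of_le {i k : Fin n} (hik : i ≤ k) :
    Function.update (hybrid y z (i + 1) k) i (y i) = hybrid y z i k := by
  funext t
  rcases eq_or_ne t i with rfl | hti
  · simp [hybrid, hik]
  · have hval : (i : ℕ) ≠ t := Fin.val_ne_of_ne hti.symm
    simp only [Function.update_of_ne hti, hybrid]
    grind

theorem hybrid_of_lt {m : ℕ} {k : Fin n} (hkm : (k : ℕ) < m) : hybrid y z m k = z := by
  funext t
  simp only [hybrid, Fin.le_def]
  grind

theorem hybrid_congr_outside {z' : Fin n → A} {j k : Fin n}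
    (hagree : ∀ t, (t < j ∨ k < t) → z' t = z t) : hybrid y z' j k = hybrid y z j k := by
  funext t
  simp only [hybrid, ← Fin.le_def]
  grind

end hybrid

theorem hcb_segment_infilling_general
    {A : Type*} [Fintype A] [DecidableEq A] {n : ℕ}
    (p : (Fin n → A) → ℝ)
    (hpos : ∀ w, 0 < p w)
    (j k : Fin n) (hjk : j ≤ k)
    (x x' y : Fin n → A)
    (hagree : ∀ t, (t < j ∨ k < t) → x' t = x t) :
    (p x / ∑ w : Fin n → A, if (∀ t, (t < j ∨ k < t) → w t = x t) then p w else 0) /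
      (p x' / ∑ w : Fin n → A, if (∀ t, (t < j ∨ k < t) → w t = x t) then p w else 0) =
    ∏ i ∈ Finset.Icc j k,
      (siteCond p (fun t => if i < t ∧ t ≤ k then y t else x t) i (x i) /
          siteCond p (fun t => if i < t ∧ t ≤ k then y t else x t) i (y i)) *
        (siteCond p (fun t => if i < t ∧ t ≤ k then y t else x' t) i (y i) /
          siteCond p (fun t => if i < t ∧ t ≤ k then y t else x' t) i (x' i)) := by
  have hnorm : 0 < ∑ w : Fin n → A, if (∀ t, (t < j ∨ k < t) → w t = x t) then p w else 0 :=
    Finset.sum_pos' (fun w _ => by split_ifs <;> simp [(hpos w).le])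
      ⟨x, Finset.mem_univ x, by simp [hpos x]⟩
  set R : ℕ → ℝ := fun m => p (hybrid y x m k) / p (hybrid y x' m k)
  have hfactor : ∀ i ∈ Finset.Icc j k,
      (siteCond p (fun t => if i < t ∧ t ≤ k then y t else x t) i (x i) /
          siteCond p (fun t => if i < t ∧ t ≤ k then y t else x t) i (y i)) *
        (siteCond p (fun t => if i < t ∧ t ≤ k then y t else x' t) i (y i) /
          siteCond p (fun t => if i < t ∧ t ≤ k then y t else x' t) i (x' i)) =
      R (i + 1) / R i := fun i hi => by
    rw [siteCond_div_siteCond hpos, siteCond_div_siteCond hpos, ← hybrid_succ,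
      ← hybrid_succ, update_hybrid_succ_self, update_hybrid_succ_self,
      update_hybrid_succ_of_le _ _ (Finset.mem_Icc.1 hi).2,
      update_hybrid_succ_of_le _ _ (Finset.mem_Icc.1 hi).2, div_mul_div_comm, div_div_div_eq,
      mul_comm (p (hybrid y x i k))]
  rw [div_div_div_cancel_right₀ hnorm.ne', Finset.prod_congr rfl hfactor,
    Fin.prod_Icc_div_of_ne_zero hjk R fun m => (div_pos (hpos _) (hpos _)).ne']
  simp only [R, hybrid_of_lt _ _ (Nat.lt_succ_self k), hybrid_congr_outside y x hagree,
    div_self (hpos _).ne', div_one]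

/-- **HCB for segment infilling.** Let `p` be a probability distribution with full support on
`A^n`, let `j ≤ k` delimit a window, let `x, x'` agree outside the window `{j,…,k}`, and let
`y` be any pivot. Then
`p(x_{j:k} | x_{<j}, x_{>k}) / p(x'_{j:k} | x_{<j}, x_{>k})
  = ∏_{i=j}^{k} [p(x_i | x_{<i}, y_{i+1:k}, x_{>k}) / p(y_i | x_{<i}, y_{i+1:k}, x_{>k})]
      · [p(y_i | x'_{<i}, y_{i+1:k}, x_{>k}) / p(x'_i | x'_{<i}, y_{i+1:k}, x_{>k})]`,
where each factor is the hybrid single-site conditional of `p` at coordinate `i` given the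
indicated values at all other coordinates. -/
theorem hcb_segment_infilling
    {A : Type*} [Fintype A] [DecidableEq A] [Nonempty A] {n : ℕ}
    (p : (Fin n → A) → ℝ)
    (hsum : ∑ w : Fin n → A, p w = 1) (hpos : ∀ w, 0 < p w)
    (j k : Fin n) (hjk : j ≤ k)
    (x x' y : Fin n → A)
    (hagree : ∀ t, (t < j ∨ k < t) → x' t = x t) :
    (p x / ∑ w : Fin n → A, if (∀ t, (t < j ∨ k < t) → w t = x t) then p w else 0) /
      (p x' / ∑ w : Fin n → A, if (∀ t, (t < j ∨ k < t) → w t = x t) then p w else 0) =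
    ∏ i ∈ Finset.Icc j k,
      (siteCond p (fun t => if i < t ∧ t ≤ k then y t else x t) i (x i) /
          siteCond p (fun t => if i < t ∧ t ≤ k then y t else x t) i (y i)) *
        (siteCond p (fun t => if i < t ∧ t ≤ k then y t else x' t) i (y i) /
          siteCond p (fun t => if i < t ∧ t ≤ k then y t else x' t) i (x' i)) :=
  hcb_segment_infilling_general p hpos j k hjk x x' y hagree
end

section
/- (General conditional independence from masking) In the masked-data model, let S ⊆ {1,…,n} be any set of positions, j ∈ S, a ∈ A, and let values x_k ∈ A for k ∉ S be such that P(X_k = x_k for all k ∉ S) > 0. Then P( X_j = a | Y_k = some x_k for all k ∉ S, and Y_k = none for all k ∈ S ) is well defined and equals P( X_j = a | X_k = x_k for all k ∉ S ). In particular (taking S = {j}), the full-context masked conditional P( X_j = a | Y_j = none, Y_k = some x_k for all k ≠ j ) equals the conditional P( X_j = a | X_k = x_k for all k ≠ j ) of the joint distribution P, so the learned conditionals are the conditionals of the single joint distribution P and hence compatible. -/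
/-- The joint distribution of `(X, Z)` in the masked-data model: `X ~ P` and the mask
indicators `Z_j` are i.i.d. Bernoulli(q), independent of `X`. -/
noncomputable def maskedJoint {A : Type*} {n : ℕ} (P : (Fin n → A) → ℝ) (q : ℝ) :
    (Fin n → A) × (Fin n → Bool) → ℝ :=
  fun xz => P xz.1 * ∏ j : Fin n, (if xz.2 j = true then q else 1 - q)

/-- The masked sequence `Y ∈ (Option A)^n`: `Y_j = some X_j` if `Z_j = 0` and
`Y_j = none` (the mask symbol) if `Z_j = 1`. -/
def maskedSeq {A : Type*} {n : ℕ} (xz : (Fin n → A) × (Fin n → Bool)) : Fin n → Option A :=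
  fun j => if xz.2 j = true then none else some (xz.1 j)

/-- The probability of an event `E` under a distribution `μ` on a finite sample space. -/
noncomputable def prFin {Ω : Type*} [Fintype Ω] (μ : Ω → ℝ) (E : Set Ω) : ℝ :=
  ∑ ω, E.indicator μ ω

/-! The event `Y = (x off S, [M] on S)` is exactly `{X = x off S} × {Z = 𝟙_S}`. Since `Z` is
independent of `X`, its probability, and that of its intersection with any event `{X ∈ T}`,
is the `P`-probability of the corresponding `X`-event times the positive factor
`P(Z = 𝟙_S) = q^|S| (1 - q)^(n - |S|)`, which cancels in the conditional probability. -/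

lemma prFin_prod_fst_mem_snd_eq {α β : Type*} [Fintype α] [Fintype β]
    (μ : α → ℝ) (ν : β → ℝ) (T : Set α) (z : β) :
    prFin (fun p : α × β => μ p.1 * ν p.2) {p | p.1 ∈ T ∧ p.2 = z} = ν z * prFin μ T := by
  classical
  simp only [prFin, Fintype.sum_prod_type, Set.indicator_apply, Set.mem_ofPred_eq, ite_and,
    Finset.mul_sum]
  refine Finset.sum_congr rfl fun a _ => ?_
  split_ifs <;> simp [mul_comm]

lemma maskWeight_pos {n : ℕ} {q : ℝ} (hq0 : 0 < q) (hq1 : q < 1) (z : Fin n → Bool) :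
    0 < ∏ k, (if z k = true then q else 1 - q) :=
  Finset.prod_pos fun k _ => by split_ifs <;> linarith

lemma maskedSeq_eq_mask_pattern_iff {A : Type*} {n : ℕ} (S : Set (Fin n)) [DecidablePred (· ∈ S)]
    (x : Fin n → A) (xz : (Fin n → A) × (Fin n → Bool)) :
    ((∀ k, k ∉ S → maskedSeq xz k = some (x k)) ∧ (∀ k, k ∈ S → maskedSeq xz k = none)) ↔
      (∀ k, k ∉ S → xz.1 k = x k) ∧ xz.2 = fun k => decide (k ∈ S) := by
  simp only [maskedSeq, funext_iff]
  constructor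
  · rintro ⟨hout, hin⟩
    have hout' : ∀ k, k ∉ S → xz.2 k = false ∧ xz.1 k = x k := fun k hk => by
      simpa using hout k hk
    refine ⟨fun k hk => (hout' k hk).2, fun k => ?_⟩
    by_cases hk : k ∈ S
    · simpa [hk] using hin k hk
    · simpa [hk] using (hout' k hk).1
  · rintro ⟨hx, hz⟩
    exact ⟨fun k hk => by simp [hz, hk, hx k hk], fun k hk => by simp [hz, hk]⟩

lemma prFin_maskedJoint_fst_mem_masked {A : Type*} [Fintype A] {n : ℕ}
    (P : (Fin n → A) → ℝ) (q : ℝ) (S : Set (Fin n)) [DecidablePred (· ∈ S)]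
    (x : Fin n → A) (T : Set (Fin n → A)) :
    prFin (maskedJoint P q)
        {xz | xz.1 ∈ T ∧ (∀ k, k ∉ S → maskedSeq xz k = some (x k)) ∧
              (∀ k, k ∈ S → maskedSeq xz k = none)} =
      (∏ k, if decide (k ∈ S) = true then q else 1 - q) *
        prFin P {w | w ∈ T ∧ ∀ k, k ∉ S → w k = x k} := by
  have hset : {xz : (Fin n → A) × (Fin n → Bool) | xz.1 ∈ T ∧
        (∀ k, k ∉ S → maskedSeq xz k = some (x k)) ∧ (∀ k, k ∈ S → maskedSeq xz k = none)} =
      {xz | xz.1 ∈ {w | w ∈ T ∧ ∀ k, k ∉ S → w k = x k} ∧ xz.2 = fun k => decide (k ∈ S)} := by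
    ext xz
    simp only [Set.mem_ofPred_eq, maskedSeq_eq_mask_pattern_iff, and_assoc]
  rw [hset]
  exact prFin_prod_fst_mem_snd_eq P
    (fun z : Fin n → Bool => ∏ k, if z k = true then q else 1 - q) _ _

theorem masked_conditional_independence_general
    {A : Type*} [Fintype A] {n : ℕ}
    (P : (Fin n → A) → ℝ)
    (q : ℝ) (hq0 : 0 < q) (hq1 : q < 1)
    (S : Set (Fin n)) (j : Fin n) (a : A) (x : Fin n → A)
    (hx : 0 < prFin P {w | ∀ k, k ∉ S → w k = x k}) :
    0 < prFin (maskedJoint P q)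
        {xz | (∀ k, k ∉ S → maskedSeq xz k = some (x k)) ∧
              (∀ k, k ∈ S → maskedSeq xz k = none)} ∧
    prFin (maskedJoint P q)
        {xz | xz.1 j = a ∧ (∀ k, k ∉ S → maskedSeq xz k = some (x k)) ∧
              (∀ k, k ∈ S → maskedSeq xz k = none)} /
      prFin (maskedJoint P q)
        {xz | (∀ k, k ∉ S → maskedSeq xz k = some (x k)) ∧
              (∀ k, k ∈ S → maskedSeq xz k = none)} =
    prFin P {w | w j = a ∧ ∀ k, k ∉ S → w k = x k} /
      prFin P {w | ∀ k, k ∉ S → w k = x k} := by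
  classical
  have hc := maskWeight_pos hq0 hq1 fun k => decide (k ∈ S)
  have hden := prFin_maskedJoint_fst_mem_masked P q S x Set.univ
  have hnum := prFin_maskedJoint_fst_mem_masked P q S x {w | w j = a}
  simp only [Set.mem_univ, true_and, Set.mem_ofPred_eq] at hden hnum
  rw [hden, hnum, mul_div_mul_left _ _ hc.ne']
  exact ⟨mul_pos hc hx, rfl⟩

/-- **General conditional independence from masking.** In the masked-data model, let
`S` be any set of positions, `j ∈ S`, `a ∈ A`, and let values `x_k` for `k ∉ S` satisfy
`P(X_k = x_k for all k ∉ S) > 0`. Then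
`P(X_j = a | Y_k = some x_k for all k ∉ S, Y_k = none for all k ∈ S)` is well defined
(the conditioning event has positive probability) and equals
`P(X_j = a | X_k = x_k for all k ∉ S)`. -/
theorem masked_conditional_independence
    {A : Type*} [Fintype A] [Nonempty A] {n : ℕ} (hn : 1 ≤ n)
    (P : (Fin n → A) → ℝ) (hP0 : ∀ w, 0 ≤ P w) (hP1 : ∑ w : Fin n → A, P w = 1)
    (q : ℝ) (hq0 : 0 < q) (hq1 : q < 1)
    (S : Set (Fin n)) (j : Fin n) (hj : j ∈ S) (a : A) (x : Fin n → A)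
    (hx : 0 < prFin P {w | ∀ k, k ∉ S → w k = x k}) :
    0 < prFin (maskedJoint P q)
        {xz | (∀ k, k ∉ S → maskedSeq xz k = some (x k)) ∧
              (∀ k, k ∈ S → maskedSeq xz k = none)} ∧
    prFin (maskedJoint P q)
        {xz | xz.1 j = a ∧ (∀ k, k ∉ S → maskedSeq xz k = some (x k)) ∧
              (∀ k, k ∈ S → maskedSeq xz k = none)} /
      prFin (maskedJoint P q)
        {xz | (∀ k, k ∉ S → maskedSeq xz k = some (x k)) ∧
              (∀ k, k ∈ S → maskedSeq xz k = none)} =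
    prFin P {w | w j = a ∧ ∀ k, k ∉ S → w k = x k} /
      prFin P {w | ∀ k, k ∉ S → w k = x k} :=
  masked_conditional_independence_general P q hq0 hq1 S j a x hx
end

section
/- (Masked chain-rule factorization) In the masked-data model, for any sequence x ∈ A^n with P(X = x) > 0, P(X = x) = ∏_{i=1}^n P( X_i = x_i | Y_k = some x_k for all k < i, and Y_k = none for all k ≥ i ); that is, the joint probability of a sequence factors exactly into the left-to-right masked conditionals in which all positions from i onward are masked. -/
/-!
Conditioning on the masked pattern that reveals `x` before position `i` and masks everything
from `i` on determines the mask `Z` completely, so the mask probability is a common factor of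
numerator and denominator. Each masked conditional is therefore the ordinary conditional
`P(X_i = x_i | X_k = x_k for k < i)`, and the product of these telescopes to `P(X = x)`.
-/

open Finset

section Marginal

variable {Ω : Type*} [Fintype Ω]

lemma prFin_univ (μ : Ω → ℝ) : prFin μ Set.univ = ∑ ω, μ ω := by
  simp [prFin]

lemma prFin_singleton (μ : Ω → ℝ) (a : Ω) : prFin μ {a} = μ a := by
  classical
  simp [prFin, Set.indicator_apply]

lemma le_prFin_of_mem {μ : Ω → ℝ} (hμ : ∀ ω, 0 ≤ μ ω) {E : Set Ω} {a : Ω} (ha : a ∈ E) :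
    μ a ≤ prFin μ E := by
  calc μ a = E.indicator μ a := (Set.indicator_of_mem ha μ).symm
    _ ≤ prFin μ E :=
      single_le_sum (fun ω _ => Set.indicator_nonneg (fun ω _ => hμ ω) ω) (mem_univ a)

end Marginal

section ChainRule

variable {A : Type*} {n : ℕ}

def agreeBefore (x : Fin n → A) (m : ℕ) : Set (Fin n → A) :=
  {w | ∀ k : Fin n, (k : ℕ) < m → w k = x k}

lemma agreeBefore_zero (x : Fin n → A) : agreeBefore x 0 = Set.univ := by
  simp [agreeBefore]

lemma agreeBefore_self (x : Fin n → A) : agreeBefore x n = {x} := by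
  ext w
  simp only [agreeBefore, Set.mem_ofPred_eq, Set.mem_singleton_iff, funext_iff]
  exact forall_congr' fun k => ⟨fun h => h k.isLt, fun h _ => h⟩

lemma setOf_apply_eq_inter_agreeBefore (x : Fin n → A) (i : Fin n) :
    {w | w i = x i} ∩ agreeBefore x i = agreeBefore x (i + 1) := by
  ext w
  simp only [agreeBefore, Set.mem_inter_iff, Set.mem_ofPred_eq, Nat.lt_succ_iff_lt_or_eq]
  constructor
  · rintro ⟨hi, hlt⟩ k (hk | hk)
    · exact hlt k hk
    · rwa [Fin.ext hk]
  · exact fun h => ⟨h i (Or.inr rfl), fun k hk => h k (Or.inl hk)⟩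

theorem prod_prFin_agreeBefore_div [Fintype A] {P : (Fin n → A) → ℝ} (hP0 : ∀ w, 0 ≤ P w)
    (hP1 : ∑ w, P w = 1) {x : Fin n → A} (hx : 0 < P x) :
    ∏ i : Fin n, prFin P (agreeBefore x (i + 1)) / prFin P (agreeBefore x i) = P x := by
  have hpos (m : ℕ) : prFin P (agreeBefore x m) ≠ 0 :=
    (hx.trans_le (le_prFin_of_mem hP0 (E := agreeBefore x m) fun _ _ => rfl)).ne'
  have htel := congrArg Units.val
    (prod_range_div (fun m => Units.mk0 (prFin P (agreeBefore x m)) (hpos m)) n)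
  simp only [Units.coe_prod, Units.val_div_eq_div_val, Units.val_mk0] at htel
  rw [Fin.prod_univ_eq_prod_range
      (fun m => prFin P (agreeBefore x (m + 1)) / prFin P (agreeBefore x m)), htel, agreeBefore_zero,
    agreeBefore_self, prFin_univ, prFin_singleton, hP1, div_one]

end ChainRule

section Masked

variable {A : Type*} {n : ℕ}

def revealBefore (x : Fin n → A) (i : Fin n) : Fin n → Option A :=
  fun k => if k < i then some (x k) else none

lemma eq_revealBefore_iff (x : Fin n → A) (i : Fin n) (v : Fin n → Option A) :
    v = revealBefore x i ↔ (∀ k, k < i → v k = some (x k)) ∧ ∀ k, i ≤ k → v k = none := by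
  simp only [funext_iff, revealBefore]
  refine ⟨fun h => ⟨fun k hk => by simp [h k, hk], fun k hk => by simp [h k, hk.not_gt]⟩,
    fun ⟨hlt, hge⟩ k => ?_⟩
  rcases lt_or_ge k i with hk | hk
  · simp [hlt k hk, hk]
  · simp [hge k hk, hk.not_gt]

lemma setOf_forall_mem_revealBefore (x : Fin n → A) (i : Fin n) :
    {w : Fin n → A | ∀ j, ∀ a ∈ revealBefore x i j, w j = a} = agreeBefore x i := by
  ext w
  simp [revealBefore, agreeBefore]

lemma maskedSeq_eq_iff (xz : (Fin n → A) × (Fin n → Bool)) (y : Fin n → Option A) :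
    maskedSeq xz = y ↔ (∀ j, ∀ a ∈ y j, xz.1 j = a) ∧ xz.2 = fun j => (y j).isNone := by
  simp only [funext_iff, maskedSeq, ← forall_and]
  refine forall_congr' fun j => ?_
  cases xz.2 j <;> cases y j <;> simp [eq_comm]

def maskWeight (q : ℝ) (y : Fin n → Option A) : ℝ :=
  ∏ j, if (y j).isNone then q else 1 - q

lemma maskWeight_pos_s7 {q : ℝ} (hq0 : 0 < q) (hq1 : q < 1) (y : Fin n → Option A) :
    0 < maskWeight q y :=
  prod_pos fun j _ => by split <;> linarith

/-- Observing `Y = y` pins down the mask `Z` and constrains `X` only on the revealed positions. -/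
theorem prFin_maskedJoint_fst_mem_and_maskedSeq_eq [Fintype A] (P : (Fin n → A) → ℝ) (q : ℝ)
    (E : Set (Fin n → A)) (y : Fin n → Option A) :
    prFin (maskedJoint P q) {xz | xz.1 ∈ E ∧ maskedSeq xz = y} =
      prFin P (E ∩ {w | ∀ j, ∀ a ∈ y j, w j = a}) * maskWeight q y := by
  classical
  have hfiber (w : Fin n → A) :
      ∑ z, {xz | xz.1 ∈ E ∧ maskedSeq xz = y}.indicator (maskedJoint P q) (w, z) =
        (E ∩ {w | ∀ j, ∀ a ∈ y j, w j = a}).indicator P w * maskWeight q y := by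
    rw [sum_eq_single fun j => (y j).isNone]
    · simp only [Set.indicator_apply, Set.mem_ofPred_eq, Set.mem_inter_iff, maskedSeq_eq_iff,
        and_true, ← and_assoc, ite_mul, zero_mul]
      rfl
    · intro z _ hz
      simp [maskedSeq_eq_iff, hz]
    · simp
  simp only [prFin, Fintype.sum_prod_type, hfiber, sum_mul]

end Masked

theorem masked_chain_rule_general
    {A : Type*} [Fintype A] {n : ℕ}
    (P : (Fin n → A) → ℝ) (hP0 : ∀ w, 0 ≤ P w) (hP1 : ∑ w : Fin n → A, P w = 1)
    (q : ℝ) (hq0 : 0 < q) (hq1 : q < 1)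
    (x : Fin n → A) (hx : 0 < P x) :
    P x =
      ∏ i : Fin n,
        prFin (maskedJoint P q)
            {xz | xz.1 i = x i ∧ (∀ k, k < i → maskedSeq xz k = some (x k)) ∧
                  (∀ k, i ≤ k → maskedSeq xz k = none)} /
          prFin (maskedJoint P q)
            {xz | (∀ k, k < i → maskedSeq xz k = some (x k)) ∧
                  (∀ k, i ≤ k → maskedSeq xz k = none)} := by
  rw [← prod_prFin_agreeBefore_div hP0 hP1 hx]
  refine prod_congr rfl fun i _ => ?_
  have hnum : {xz : (Fin n → A) × (Fin n → Bool) | xz.1 i = x i ∧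
      (∀ k, k < i → maskedSeq xz k = some (x k)) ∧ ∀ k, i ≤ k → maskedSeq xz k = none} =
      {xz | xz.1 ∈ {w | w i = x i} ∧ maskedSeq xz = revealBefore x i} := by
    simp only [eq_revealBefore_iff, Set.mem_ofPred_eq]
  have hden : {xz : (Fin n → A) × (Fin n → Bool) |
      (∀ k, k < i → maskedSeq xz k = some (x k)) ∧ ∀ k, i ≤ k → maskedSeq xz k = none} =
      {xz | xz.1 ∈ Set.univ ∧ maskedSeq xz = revealBefore x i} := by
    simp only [eq_revealBefore_iff, Set.mem_univ, true_and]
  rw [hnum, hden, prFin_maskedJoint_fst_mem_and_maskedSeq_eq,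
    prFin_maskedJoint_fst_mem_and_maskedSeq_eq, setOf_forall_mem_revealBefore, Set.univ_inter,
    setOf_apply_eq_inter_agreeBefore, mul_div_mul_right _ _ (maskWeight_pos_s7 hq0 hq1 _).ne']

/-- **Masked chain-rule factorization.** In the masked-data model, for any sequence
`x ∈ A^n` with `P(X = x) > 0`,
`P(X = x) = ∏_{i=1}^n P(X_i = x_i | Y_k = some x_k for all k < i, Y_k = none for all k ≥ i)`:
the joint probability of a sequence factors exactly into the left-to-right masked
conditionals in which all positions from `i` onward are masked. -/
theorem masked_chain_rule
    {A : Type*} [Fintype A] [Nonempty A] {n : ℕ} (hn : 1 ≤ n)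
    (P : (Fin n → A) → ℝ) (hP0 : ∀ w, 0 ≤ P w) (hP1 : ∑ w : Fin n → A, P w = 1)
    (q : ℝ) (hq0 : 0 < q) (hq1 : q < 1)
    (x : Fin n → A) (hx : 0 < P x) :
    P x =
      ∏ i : Fin n,
        prFin (maskedJoint P q)
            {xz | xz.1 i = x i ∧ (∀ k, k < i → maskedSeq xz k = some (x k)) ∧
                  (∀ k, i ≤ k → maskedSeq xz k = none)} /
          prFin (maskedJoint P q)
            {xz | (∀ k, k < i → maskedSeq xz k = some (x k)) ∧
                  (∀ k, i ≤ k → maskedSeq xz k = none)} :=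
  masked_chain_rule_general P hP0 hP1 q hq0 hq1 x hx
end

section
/- (Theorem: loss-minimizing MLM conditionals are compatible and satisfy conditional independence) In the masked-data model, suppose a predictor f (assigning to each masked sequence y ∈ (Option A)^n and position j a probability distribution f(y, j) on A) minimizes the MLM loss L(f) = E[ Σ_{j : Y_j = none} −log f(Y, j)(X_j) ] over all predictors. Then for every j, every a ∈ A, and every x ∈ A^n with P(X_k = x_k for all k < j) > 0: (i) f evaluated at the context consisting of the unmasked prefix x_{<j} with all positions from j onward masked satisfies f((some x_1,…,some x_{j-1}, none,…,none), j)(a) = P(X_j = a | X_k = x_k for all k < j); and (ii) if moreover P(X_k = x_k for all k ≠ j) > 0, then f evaluated at the context with only position j masked satisfies f((some x_1,…,some x_{j-1}, none, some x_{j+1},…,some x_n), j)(a) = P(X_j = a | X_k = x_k for all k ≠ j), so the learned single-mask conditionals are exactly the conditional distributions of the single joint distribution P (hence compatible) and they satisfy the conditional independence law p(x_j | x_{<j}, [M]_{j:}) = p(x_j | x_{<j}). -/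
/-- Extended-real negative logarithm, with the convention `−log 0 = +∞`. -/
noncomputable def negLog (t : ℝ) : EReal :=
  if t = 0 then ⊤ else ((-Real.log t : ℝ) : EReal)

open Classical

/-- The MLM loss of a predictor `f`:
`L(f) = E[Σ_{j : Y_j = none} −log f(Y, j)(X_j)]`, the expectation taken over the
masked-data joint distribution `μ`, valued in the extended reals so that `L(f) = +∞` if
`f` assigns probability `0` to some realized `(X_j, Y, j)` of positive probability. -/
noncomputable def mlmLoss {A : Type*} [Fintype A] {n : ℕ}
    (μ : (Fin n → A) × (Fin n → Bool) → ℝ)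
    (f : (Fin n → Option A) → Fin n → A → ℝ) : EReal :=
  ∑ xz : (Fin n → A) × (Fin n → Bool),
    if μ xz = 0 then 0 else
      (μ xz : EReal) *
        ∑ j ∈ Finset.univ.filter (fun j : Fin n => maskedSeq xz j = none),
          negLog (f (maskedSeq xz) j (xz.1 j))

private lemma ereal_coe_sum {ι : Type*} (s : Finset ι) (g : ι → ℝ) :
    ((∑ i ∈ s, g i : ℝ) : EReal) = ∑ i ∈ s, ((g i : ℝ) : EReal) := by
  induction s using Finset.cons_induction with
  | empty => simp
  | cons a s ha ih => rw [Finset.sum_cons, Finset.sum_cons, EReal.coe_add, ih]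

private lemma gibbs {A : Type*} [Fintype A] (w f : A → ℝ)
    (hw : ∀ a, 0 ≤ w a) (hW : 0 < ∑ b, w b)
    (hf0 : ∀ a, 0 ≤ f a) (hf1 : ∑ a, f a = 1)
    (hfw : ∀ a, w a ≠ 0 → 0 < f a)
    (hle : ∑ a, w a * (Real.log (w a / ∑ b, w b) - Real.log (f a)) ≤ 0) :
    ∀ a, f a = w a / ∑ b, w b := by
  set W := ∑ b, w b with hWdef
  set S := Finset.univ.filter (fun a => w a ≠ 0) with hS
  have hmemS : ∀ a ∈ S, 0 < w a := fun a ha =>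
    lt_of_le_of_ne (hw a) (Ne.symm (by simpa [hS] using ha))
  have hSW : ∑ a ∈ S, w a = W := by
    rw [hWdef]
    apply Finset.sum_subset (Finset.subset_univ S)
    intro a _ ha
    simpa [hS] using ha
  have hrestrict : ∑ a ∈ S, w a * (Real.log (w a / W) - Real.log (f a))
      = ∑ a, w a * (Real.log (w a / W) - Real.log (f a)) := by
    apply Finset.sum_subset (Finset.subset_univ S)
    intro a _ ha
    have : w a = 0 := by simpa [hS] using ha
    simp [this]
  -- logs as log of ratio on S
  have hlog : ∀ a ∈ S, w a * (Real.log (f a / (w a / W)) )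
      = - (w a * (Real.log (w a / W) - Real.log (f a))) := by
    intro a ha
    have hwa := hmemS a ha
    have hpa : (0:ℝ) < w a / W := div_pos hwa hW
    have hfa : 0 < f a := hfw a (ne_of_gt hwa)
    rw [Real.log_div (ne_of_gt hfa) (ne_of_gt hpa)]
    ring
  have hL0 : 0 ≤ ∑ a ∈ S, w a * Real.log (f a / (w a / W)) := by
    rw [Finset.sum_congr rfl hlog, Finset.sum_neg_distrib, hrestrict]
    linarith
  have hterm : ∀ a ∈ S, w a * Real.log (f a / (w a / W)) ≤ w a * (f a / (w a / W) - 1) := by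
    intro a ha
    have hwa := hmemS a ha
    have hpa : (0:ℝ) < w a / W := div_pos hwa hW
    have hfa : 0 < f a := hfw a (ne_of_gt hwa)
    exact mul_le_mul_of_nonneg_left (Real.log_le_sub_one_of_pos (div_pos hfa hpa)) (hw a)
  have hRval : ∀ a ∈ S, w a * (f a / (w a / W) - 1) = W * f a - w a := by
    intro a ha
    have hwa := hmemS a ha
    field_simp
  have hSf : ∑ a ∈ S, f a ≤ 1 := by
    rw [← hf1]
    exact Finset.sum_le_sum_of_subset_of_nonneg (Finset.subset_univ S)
      (fun a _ _ => hf0 a)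
  have hR : ∑ a ∈ S, w a * (f a / (w a / W) - 1) = W * (∑ a ∈ S, f a) - W := by
    rw [Finset.sum_congr rfl hRval, Finset.sum_sub_distrib, ← Finset.mul_sum, hSW]
  have hR0 : ∑ a ∈ S, w a * (f a / (w a / W) - 1) ≤ 0 := by
    rw [hR]; nlinarith
  have hLR : ∑ a ∈ S, w a * Real.log (f a / (w a / W))
      ≤ ∑ a ∈ S, w a * (f a / (w a / W) - 1) := Finset.sum_le_sum hterm
  have hLeq : ∑ a ∈ S, w a * Real.log (f a / (w a / W)) = 0 := le_antisymm (hLR.trans hR0) hL0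
  have hReq : ∑ a ∈ S, w a * (f a / (w a / W) - 1) = 0 := le_antisymm hR0 (hLeq ▸ hLR)
  have hSf1 : ∑ a ∈ S, f a = 1 := by
    rw [hR] at hReq; nlinarith
  have hdiff0 : ∑ a ∈ S, (w a * (f a / (w a / W) - 1) - w a * Real.log (f a / (w a / W))) = 0 := by
    rw [Finset.sum_sub_distrib, hLeq, hReq]; ring
  have heach : ∀ a ∈ S, w a * (f a / (w a / W) - 1) - w a * Real.log (f a / (w a / W)) = 0 := by
    have := (Finset.sum_eq_zero_iff_of_nonneg (fun a ha => by
      have := hterm a ha; linarith)).1 hdiff0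
    exact this
  intro a
  by_cases haS : a ∈ S
  · have hwa := hmemS a haS
    have hpa : (0:ℝ) < w a / W := div_pos hwa hW
    have hfa : 0 < f a := hfw a (ne_of_gt hwa)
    have h1 : Real.log (f a / (w a / W)) = f a / (w a / W) - 1 := by
      have := heach a haS
      have hwane : w a ≠ 0 := ne_of_gt hwa
      field_simp at this ⊢
      nlinarith [this]
    have hratio : f a / (w a / W) = 1 := by
      by_contra hne
      exact absurd h1 (ne_of_lt (Real.log_lt_sub_one_of_pos (div_pos hfa hpa) hne))
    field_simp at hratio
    field_simp
    linarith
  · have hwa : w a = 0 := by by_contra h; exact haS (by simp [hS, h])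
    have : ∑ b ∈ Finset.univ \ S, f b = 0 := by
      have := Finset.sum_sdiff_eq_sub (Finset.subset_univ S) (f := f)
      rw [this, hf1, hSf1]; ring
    have hfa0 : f a = 0 := by
      have := (Finset.sum_eq_zero_iff_of_nonneg (fun b _ => hf0 b)).1 this a
        (by simp [hS, haS, hwa])
      exact this
    simp [hfa0, hwa]

noncomputable def realLoss {A : Type*} [Fintype A] {n : ℕ}
    (μ : (Fin n → A) × (Fin n → Bool) → ℝ)
    (f : (Fin n → Option A) → Fin n → A → ℝ) : ℝ :=
  ∑ xz : (Fin n → A) × (Fin n → Bool),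
    if μ xz = 0 then 0 else
      μ xz *
        ∑ j ∈ Finset.univ.filter (fun j : Fin n => maskedSeq xz j = none),
          (- Real.log (f (maskedSeq xz) j (xz.1 j)))

private lemma mlmLoss_eq_realLoss {A : Type*} [Fintype A] {n : ℕ}
    (μ : (Fin n → A) × (Fin n → Bool) → ℝ)
    (f : (Fin n → Option A) → Fin n → A → ℝ)
    (h : ∀ xz : (Fin n → A) × (Fin n → Bool), μ xz ≠ 0 → ∀ j : Fin n,
      maskedSeq xz j = none → f (maskedSeq xz) j (xz.1 j) ≠ 0) :
    mlmLoss μ f = ((realLoss μ f : ℝ) : EReal) := by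
  rw [mlmLoss, realLoss, ereal_coe_sum]
  refine Finset.sum_congr rfl fun xz _ => ?_
  by_cases hμ : μ xz = 0
  · simp [hμ]
  · rw [if_neg hμ, if_neg hμ, EReal.coe_mul, ereal_coe_sum]
    congr 1
    refine Finset.sum_congr rfl fun j hj => ?_
    rw [negLog, if_neg (h xz hμ j (by simpa using hj))]

private lemma negLog_nonneg {t : ℝ} (h0 : 0 ≤ t) (h1 : t ≤ 1) : 0 ≤ negLog t := by
  rw [negLog]
  split_ifs with h
  · exact le_top
  · rw [← EReal.coe_zero, EReal.coe_le_coe_iff]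
    have := Real.log_nonpos h0 h1
    linarith

private lemma mlmLoss_eq_top {A : Type*} [Fintype A] {n : ℕ}
    (μ : (Fin n → A) × (Fin n → Bool) → ℝ) (hμ0 : ∀ xz, 0 ≤ μ xz)
    (f : (Fin n → Option A) → Fin n → A → ℝ)
    (hf_pred : ∀ y j, (∀ a, 0 ≤ f y j a) ∧ ∑ a : A, f y j a = 1)
    (xz₀ : (Fin n → A) × (Fin n → Bool)) (hμ : μ xz₀ ≠ 0) (j₀ : Fin n)
    (hm : maskedSeq xz₀ j₀ = none) (hf0 : f (maskedSeq xz₀) j₀ (xz₀.1 j₀) = 0) :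
    mlmLoss μ f = ⊤ := by
  have hfle1 : ∀ y j a, f y j a ≤ 1 := by
    intro y j a
    rw [← (hf_pred y j).2]
    exact Finset.single_le_sum (fun b _ => (hf_pred y j).1 b) (Finset.mem_univ a)
  have hinner : ∀ xz : (Fin n → A) × (Fin n → Bool),
      (0:EReal) ≤ ∑ j ∈ Finset.univ.filter (fun j : Fin n => maskedSeq xz j = none),
        negLog (f (maskedSeq xz) j (xz.1 j)) := by
    intro xz
    exact Finset.sum_nonneg fun j _ =>
      negLog_nonneg ((hf_pred _ _).1 _) (hfle1 _ _ _)
  have hterm_nonneg : ∀ xz : (Fin n → A) × (Fin n → Bool),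
      (0:EReal) ≤ if μ xz = 0 then 0 else
        (μ xz : EReal) * ∑ j ∈ Finset.univ.filter (fun j : Fin n => maskedSeq xz j = none),
          negLog (f (maskedSeq xz) j (xz.1 j)) := by
    intro xz
    split_ifs with h
    · exact le_refl _
    · exact mul_nonneg (EReal.coe_nonneg.2 (hμ0 xz)) (hinner xz)
  -- the xz₀ term is ⊤
  have hμpos : (0:ℝ) < μ xz₀ := lt_of_le_of_ne (hμ0 xz₀) (Ne.symm hμ)
  have hj₀mem : j₀ ∈ Finset.univ.filter (fun j : Fin n => maskedSeq xz₀ j = none) := by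
    simp [hm]
  have htop : (∑ j ∈ Finset.univ.filter (fun j : Fin n => maskedSeq xz₀ j = none),
      negLog (f (maskedSeq xz₀) j (xz₀.1 j))) = ⊤ := by
    refine top_le_iff.1 ?_
    calc (⊤:EReal) = negLog (f (maskedSeq xz₀) j₀ (xz₀.1 j₀)) := by rw [hf0, negLog, if_pos rfl]
    _ ≤ _ := Finset.single_le_sum (f := fun j => negLog (f (maskedSeq xz₀) j (xz₀.1 j)))
        (fun j _ => negLog_nonneg ((hf_pred _ _).1 _) (hfle1 _ _ _)) hj₀mem
  have hterm_top : (if μ xz₀ = 0 then 0 else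
      (μ xz₀ : EReal) * ∑ j ∈ Finset.univ.filter (fun j : Fin n => maskedSeq xz₀ j = none),
        negLog (f (maskedSeq xz₀) j (xz₀.1 j))) = ⊤ := by
    rw [if_neg hμ, htop, EReal.coe_mul_top_of_pos hμpos]
  refine top_le_iff.1 ?_
  rw [mlmLoss]
  calc (⊤:EReal) = _ := hterm_top.symm
  _ ≤ _ := Finset.single_le_sum (fun xz _ => hterm_nonneg xz) (Finset.mem_univ xz₀)

private lemma prFin_eq_sum {Ω : Type*} [Fintype Ω] (μ : Ω → ℝ) (E : Set Ω) :
    prFin μ E = ∑ ω, if ω ∈ E then μ ω else 0 :=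
  Finset.sum_congr rfl fun ω _ => Set.indicator_apply E μ ω

private lemma prFin_nonneg {Ω : Type*} [Fintype Ω] {μ : Ω → ℝ} (h0 : ∀ ω, 0 ≤ μ ω)
    (E : Set Ω) : 0 ≤ prFin μ E := by
  rw [prFin_eq_sum]
  refine Finset.sum_nonneg fun ω _ => ?_
  split_ifs; exacts [h0 ω, le_rfl]

private lemma le_prFin {Ω : Type*} [Fintype Ω] {μ : Ω → ℝ} (h0 : ∀ ω, 0 ≤ μ ω)
    {E : Set Ω} {x : Ω} (hx : x ∈ E) : μ x ≤ prFin μ E := by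
  rw [prFin_eq_sum]
  calc μ x = if x ∈ E then μ x else 0 := (if_pos hx).symm
  _ ≤ _ := Finset.single_le_sum (f := fun ω => if ω ∈ E then μ ω else 0)
      (fun ω _ => by split_ifs; exacts [h0 ω, le_rfl]) (Finset.mem_univ x)

private lemma key {A : Type*} [Fintype A] [Nonempty A] {n : ℕ}
    (P : (Fin n → A) → ℝ) (hP0 : ∀ w, 0 ≤ P w)
    (q : ℝ) (hq0 : 0 < q) (hq1 : q < 1)
    (f : (Fin n → Option A) → Fin n → A → ℝ)
    (hf_pred : ∀ y j, (∀ a, 0 ≤ f y j a) ∧ ∑ a : A, f y j a = 1)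
    (hmin : ∀ g : (Fin n → Option A) → Fin n → A → ℝ,
      (∀ y j, (∀ a, 0 ≤ g y j a) ∧ ∑ a : A, g y j a = 1) →
      mlmLoss (maskedJoint P q) f ≤ mlmLoss (maskedJoint P q) g)
    (j₀ : Fin n) (y₀ : Fin n → Option A) (hy : y₀ j₀ = none)
    (hE : 0 < prFin P {v | ∀ k, ∀ b, y₀ k = some b → v k = b}) (a : A) :
    f y₀ j₀ a = prFin P {v | v j₀ = a ∧ ∀ k, ∀ b, y₀ k = some b → v k = b} /
      prFin P {v | ∀ k, ∀ b, y₀ k = some b → v k = b} := by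
  set μ : (Fin n → A) × (Fin n → Bool) → ℝ := maskedJoint P q with hμdef
  have hμ0 : ∀ xz, 0 ≤ μ xz := fun xz =>
    mul_nonneg (hP0 _) (Finset.prod_nonneg fun k _ => by split_ifs <;> linarith)
  -- Step 1: f is positive at realized points
  have hcard : (0:ℝ) < Fintype.card A := by
    have := Fintype.card_pos (α := A); exact_mod_cast this
  set u : (Fin n → Option A) → Fin n → A → ℝ := fun _ _ _ => (Fintype.card A : ℝ)⁻¹
    with hudef
  have hu_pred : ∀ (y : Fin n → Option A) (j : Fin n),
      (∀ a : A, 0 ≤ u y j a) ∧ ∑ a : A, u y j a = 1 := by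
    intro y j
    constructor
    · intro _; simp only [hudef]; positivity
    · simp only [hudef]
      rw [Finset.sum_const, Finset.card_univ, nsmul_eq_mul, mul_inv_cancel₀ (ne_of_gt hcard)]
  have hftop : mlmLoss μ f ≠ ⊤ := by
    have h1 := hmin u hu_pred
    rw [mlmLoss_eq_realLoss μ u (fun xz _ j _ => by
      simp only [hudef]; exact inv_ne_zero (ne_of_gt hcard))] at h1
    exact ne_top_of_le_ne_top (EReal.coe_ne_top _) h1
  have hfpos : ∀ xz, μ xz ≠ 0 → ∀ j, maskedSeq xz j = none →
      0 < f (maskedSeq xz) j (xz.1 j) := by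
    intro xz hxz j hj
    rcases ((hf_pred (maskedSeq xz) j).1 (xz.1 j)).lt_or_eq with h | h
    · exact h
    · exact absurd (mlmLoss_eq_top μ hμ0 f hf_pred xz hxz j hj h.symm) hftop
  have hfR : mlmLoss μ f = ((realLoss μ f : ℝ) : EReal) :=
    mlmLoss_eq_realLoss μ f (fun xz hxz j hj => ne_of_gt (hfpos xz hxz j hj))
  -- Step 2: the weights
  set E : Set (Fin n → A) := {v | ∀ k, ∀ b, y₀ k = some b → v k = b} with hEdef
  set N : A → ℝ := fun b => prFin P {v | v j₀ = b ∧ ∀ k, ∀ b', y₀ k = some b' → v k = b'}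
    with hNdef
  set p : A → ℝ := fun b => N b / prFin P E with hpdef
  set C : ℝ := ∏ k : Fin n, (if y₀ k = none then q else 1 - q) with hCdef
  have hC : 0 < C := Finset.prod_pos fun k _ => by split_ifs <;> linarith
  set z₀ : Fin n → Bool := fun k => (y₀ k).isNone with hz₀def
  have hz₀iff : ∀ k, z₀ k = true ↔ y₀ k = none := fun k => by
    rw [hz₀def]; exact Option.isNone_iff_eq_none
  have hmask : ∀ (x : Fin n → A) (z : Fin n → Bool),
      maskedSeq (x, z) = y₀ ↔ (z = z₀ ∧ ∀ k b, y₀ k = some b → x k = b) := by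
    intro x z
    constructor
    · intro h
      constructor
      · funext k
        have hk : (if z k = true then none else some (x k)) = y₀ k := congrFun h k
        by_cases hz : z k = true
        · rw [if_pos hz] at hk
          rw [hz, eq_comm, hz₀iff k, ← hk]
        · rw [if_neg hz] at hk
          have : ¬ (z₀ k = true) := by rw [hz₀iff k, ← hk]; simp
          rw [Bool.not_eq_true] at this hz
          rw [hz, this]
      · intro k b hb
        have hk : (if z k = true then none else some (x k)) = y₀ k := congrFun h k
        by_cases hz : z k = true
        · rw [if_pos hz, hb] at hk; cases hk
        · rw [if_neg hz, hb] at hk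
          exact Option.some_injective _ hk
    · rintro ⟨hz, hx⟩
      subst hz
      funext k
      show (if z₀ k = true then none else some (x k)) = y₀ k
      cases hyk : y₀ k with
      | none =>
        rw [if_pos ((hz₀iff k).2 hyk)]
      | some b =>
        have hzk : ¬ (z₀ k = true) := by rw [hz₀iff k, hyk]; simp
        rw [if_neg hzk, hx k b hyk]
  set w : A → ℝ := fun b => ∑ xz : (Fin n → A) × (Fin n → Bool),
      if maskedSeq xz = y₀ ∧ xz.1 j₀ = b then μ xz else 0 with hwdef
  have hw_eq : ∀ b, w b = C * N b := by
    intro b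
    show (∑ xz : (Fin n → A) × (Fin n → Bool),
      if maskedSeq xz = y₀ ∧ xz.1 j₀ = b then μ xz else 0) = C * N b
    rw [Fintype.sum_prod_type]
    have hinner : ∀ x : Fin n → A,
        (∑ z : Fin n → Bool, if maskedSeq (x, z) = y₀ ∧ x j₀ = b then μ (x, z) else 0)
        = if x j₀ = b ∧ (∀ k b', y₀ k = some b' → x k = b') then C * P x else 0 := by
      intro x
      show (∑ z : Fin n → Bool, if maskedSeq (x, z) = y₀ ∧ x j₀ = b then μ (x, z) else 0) = _
      by_cases hx : x j₀ = b ∧ (∀ k b', y₀ k = some b' → x k = b')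
      · rw [if_pos hx]
        have hzz : ∀ z : Fin n → Bool,
            (if maskedSeq (x, z) = y₀ ∧ x j₀ = b then μ (x, z) else 0)
            = if z = z₀ then μ (x, z) else 0 := by
          intro z
          refine if_congr ?_ rfl rfl
          rw [hmask x z]
          constructor
          · rintro ⟨⟨h1, _⟩, _⟩; exact h1
          · intro h1; exact ⟨⟨h1, hx.2⟩, hx.1⟩
        rw [Finset.sum_congr rfl (fun z _ => hzz z),
          Finset.sum_ite_eq' Finset.univ z₀ (fun z => μ (x, z)), if_pos (Finset.mem_univ _)]
        show P x * (∏ k : Fin n, if z₀ k = true then q else 1 - q) = C * P x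
        rw [mul_comm]
        congr 1
        rw [hCdef]
        refine Finset.prod_congr rfl fun k _ => ?_
        by_cases hk : y₀ k = none
        · rw [if_pos hk, if_pos ((hz₀iff k).2 hk)]
        · rw [if_neg hk, if_neg (fun h => hk ((hz₀iff k).1 h))]
      · rw [if_neg hx]
        apply Finset.sum_eq_zero
        intro z _
        rw [if_neg]
        rintro ⟨h1, h2⟩
        rw [hmask x z] at h1
        exact hx ⟨h2, h1.2⟩
    rw [Finset.sum_congr rfl (fun x _ => hinner x)]
    simp only [hNdef]
    rw [prFin_eq_sum, Finset.mul_sum]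
    simp only [Set.mem_setOf_eq]
    refine Finset.sum_congr rfl fun x _ => ?_
    by_cases h : x j₀ = b ∧ (∀ k b', y₀ k = some b' → x k = b')
    · rw [if_pos h, if_pos h]
    · rw [if_neg h, if_neg h, mul_zero]
  have hNsum : ∑ b, N b = prFin P E := by
    simp only [hNdef, hEdef, prFin_eq_sum, Set.mem_setOf_eq]
    rw [Finset.sum_comm]
    refine Finset.sum_congr rfl fun x _ => ?_
    by_cases hxE : (∀ k b', y₀ k = some b' → x k = b')
    · rw [if_pos hxE]
      have h1 : ∀ b : A, (x j₀ = b ∧ ∀ k, ∀ b', y₀ k = some b' → x k = b') ↔ x j₀ = b :=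
        fun b => ⟨fun h => h.1, fun h => ⟨h, hxE⟩⟩
      simp only [h1]
      rw [Finset.sum_ite_eq Finset.univ (x j₀) (fun _ => P x), if_pos (Finset.mem_univ _)]
    · rw [if_neg hxE]
      apply Finset.sum_eq_zero
      intro b _
      rw [if_neg]
      intro h
      exact hxE h.2
  have hwsum : ∑ b, w b = C * prFin P E := by
    rw [Finset.sum_congr rfl (fun b _ => hw_eq b), ← Finset.mul_sum, hNsum]
  have hW : 0 < ∑ b, w b := by rw [hwsum]; exact mul_pos hC hE
  have hp : ∀ b, w b / ∑ c, w c = p b := by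
    intro b
    rw [hwsum, hw_eq b]
    simp only [hpdef]
    rw [mul_div_mul_left _ _ (ne_of_gt hC)]
  have hw0 : ∀ b, 0 ≤ w b := by
    intro b
    rw [hw_eq b]
    exact mul_nonneg (le_of_lt hC) (prFin_nonneg hP0 _)
  -- Step 3: perturbed predictor g
  set g : (Fin n → Option A) → Fin n → A → ℝ :=
    fun y j b => if y = y₀ ∧ j = j₀ then p b else f y j b with hgdef
  have hpsum : ∑ b, p b = 1 := by
    simp only [hpdef]
    rw [← Finset.sum_div, hNsum, div_self (ne_of_gt hE)]
  have hp0 : ∀ b, 0 ≤ p b := fun b => by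
    simp only [hpdef, hNdef]
    exact div_nonneg (prFin_nonneg hP0 _) (prFin_nonneg hP0 _)
  have hg_pred : ∀ y j, (∀ b, 0 ≤ g y j b) ∧ ∑ b : A, g y j b = 1 := by
    intro y j
    by_cases h : y = y₀ ∧ j = j₀
    · simp only [hgdef, if_pos h]
      exact ⟨hp0, hpsum⟩
    · simp only [hgdef, if_neg h]
      exact hf_pred y j
  have hg_pos : ∀ xz, μ xz ≠ 0 → ∀ j, maskedSeq xz j = none →
      g (maskedSeq xz) j (xz.1 j) ≠ 0 := by
    intro xz hxz j hj
    by_cases h : maskedSeq xz = y₀ ∧ j = j₀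
    · have hPx : 0 < P xz.1 := by
        rcases (hP0 xz.1).lt_or_eq with h' | h'
        · exact h'
        · exact absurd (by rw [hμdef]; show P xz.1 * _ = 0; rw [← h', zero_mul]) hxz
      have hxE : ∀ k b', y₀ k = some b' → xz.1 k = b' := by
        have := (hmask xz.1 xz.2).1 (by rw [Prod.mk.eta]; exact h.1)
        exact this.2
      have hNpos : 0 < N (xz.1 j₀) := by
        simp only [hNdef]
        exact lt_of_lt_of_le hPx (le_prFin hP0 ⟨rfl, hxE⟩)
      have hgv : g (maskedSeq xz) j (xz.1 j) = p (xz.1 j₀) := by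
        show (if maskedSeq xz = y₀ ∧ j = j₀ then p (xz.1 j) else
          f (maskedSeq xz) j (xz.1 j)) = p (xz.1 j₀)
        rw [if_pos h, h.2]
      rw [hgv]
      simp only [hpdef]
      exact ne_of_gt (div_pos hNpos hE)
    · simp only [hgdef, if_neg h]
      exact ne_of_gt (hfpos xz hxz j hj)
  have hgR : mlmLoss μ g = ((realLoss μ g : ℝ) : EReal) := mlmLoss_eq_realLoss μ g hg_pos
  have hcomp : realLoss μ f ≤ realLoss μ g := by
    have h1 := hmin g hg_pred
    rw [hfR, hgR] at h1
    exact_mod_cast h1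
  -- Step 4: compute the loss difference
  set c : A → ℝ := fun b => Real.log (p b) - Real.log (f y₀ j₀ b) with hcdef
  have hterm : ∀ xz : (Fin n → A) × (Fin n → Bool),
      (if μ xz = 0 then 0 else μ xz *
          ∑ j ∈ Finset.univ.filter (fun j : Fin n => maskedSeq xz j = none),
            (- Real.log (f (maskedSeq xz) j (xz.1 j)))) -
        (if μ xz = 0 then 0 else μ xz *
          ∑ j ∈ Finset.univ.filter (fun j : Fin n => maskedSeq xz j = none),
            (- Real.log (g (maskedSeq xz) j (xz.1 j))))
      = if maskedSeq xz = y₀ then μ xz * c (xz.1 j₀) else 0 := by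
    intro xz
    by_cases hμz : μ xz = 0
    · rw [if_pos hμz, if_pos hμz, hμz]
      split_ifs <;> simp
    · rw [if_neg hμz, if_neg hμz]
      by_cases hys : maskedSeq xz = y₀
      · rw [if_pos hys, ← mul_sub, ← Finset.sum_sub_distrib]
        congr 1
        have hj₀mem : j₀ ∈ Finset.univ.filter (fun j : Fin n => maskedSeq xz j = none) := by
          simp [hys, hy]
        have hterms : ∀ j ∈ Finset.univ.filter (fun j : Fin n => maskedSeq xz j = none),
            (- Real.log (f (maskedSeq xz) j (xz.1 j))) -
              (- Real.log (g (maskedSeq xz) j (xz.1 j)))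
            = if j = j₀ then c (xz.1 j₀) else 0 := by
          intro j _
          by_cases hj : j = j₀
          · subst hj
            have hgv : g (maskedSeq xz) j (xz.1 j) = p (xz.1 j) := by
              show (if maskedSeq xz = y₀ ∧ j = j then p (xz.1 j) else
                f (maskedSeq xz) j (xz.1 j)) = p (xz.1 j)
              rw [if_pos ⟨hys, rfl⟩]
            rw [if_pos rfl, hgv, hys]
            simp only [hcdef]
            ring
          · have hgv : g (maskedSeq xz) j (xz.1 j) = f (maskedSeq xz) j (xz.1 j) := by
              show (if maskedSeq xz = y₀ ∧ j = j₀ then p (xz.1 j) else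
                f (maskedSeq xz) j (xz.1 j)) = f (maskedSeq xz) j (xz.1 j)
              rw [if_neg (fun hc => hj hc.2)]
            rw [hgv, if_neg hj]
            ring
        rw [Finset.sum_congr rfl hterms,
          Finset.sum_ite_eq' (Finset.univ.filter (fun j : Fin n => maskedSeq xz j = none))
            j₀ (fun _ => c (xz.1 j₀)), if_pos hj₀mem]
      · rw [if_neg hys, sub_eq_zero]
        congr 1
        refine Finset.sum_congr rfl fun j _ => ?_
        have hgv : g (maskedSeq xz) j (xz.1 j) = f (maskedSeq xz) j (xz.1 j) := by
          show (if maskedSeq xz = y₀ ∧ j = j₀ then p (xz.1 j) else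
            f (maskedSeq xz) j (xz.1 j)) = f (maskedSeq xz) j (xz.1 j)
          rw [if_neg (fun hc => hys hc.1)]
        rw [hgv]
  have hdiff : realLoss μ f - realLoss μ g = ∑ b, w b * c b := by
    rw [realLoss, realLoss, ← Finset.sum_sub_distrib,
      Finset.sum_congr rfl (fun xz _ => hterm xz)]
    have hsplit : ∀ xz : (Fin n → A) × (Fin n → Bool),
        (if maskedSeq xz = y₀ then μ xz * c (xz.1 j₀) else 0)
        = ∑ b, if xz.1 j₀ = b then (if maskedSeq xz = y₀ then μ xz * c b else 0) else 0 := by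
      intro xz
      rw [Finset.sum_ite_eq Finset.univ (xz.1 j₀)
        (fun b => if maskedSeq xz = y₀ then μ xz * c b else 0), if_pos (Finset.mem_univ _)]
    rw [Finset.sum_congr rfl (fun xz _ => hsplit xz), Finset.sum_comm]
    refine Finset.sum_congr rfl fun b _ => ?_
    simp only [hwdef]
    rw [Finset.sum_mul]
    refine Finset.sum_congr rfl fun xz _ => ?_
    by_cases h1 : xz.1 j₀ = b <;> by_cases h2 : maskedSeq xz = y₀ <;>
      simp [h1, h2]
  have hle : ∑ b, w b * (Real.log (w b / ∑ b', w b') - Real.log (f y₀ j₀ b)) ≤ 0 := by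
    have h1 : ∑ b, w b * c b ≤ 0 := by rw [← hdiff]; linarith
    calc ∑ b, w b * (Real.log (w b / ∑ b', w b') - Real.log (f y₀ j₀ b))
        = ∑ b, w b * c b := by
          refine Finset.sum_congr rfl fun b _ => ?_
          simp only [hcdef]
          rw [hp b]
    _ ≤ 0 := h1
  have hfw : ∀ b, w b ≠ 0 → 0 < f y₀ j₀ b := by
    intro b hb
    rw [hwdef] at hb
    obtain ⟨xz, _, hxz⟩ := Finset.exists_ne_zero_of_sum_ne_zero hb
    have hcond : (maskedSeq xz = y₀ ∧ xz.1 j₀ = b) ∧ μ xz ≠ 0 := by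
      by_cases h : maskedSeq xz = y₀ ∧ xz.1 j₀ = b
      · refine ⟨h, ?_⟩; intro h0; rw [if_pos h, h0] at hxz; exact hxz rfl
      · rw [if_neg h] at hxz; exact absurd rfl hxz
    have := hfpos xz hcond.2 j₀ (by rw [hcond.1.1, hy])
    rw [hcond.1.1, hcond.1.2] at this
    exact this
  have hfinal := gibbs w (f y₀ j₀) hw0 hW (hf_pred y₀ j₀).1 (hf_pred y₀ j₀).2 hfw hle a
  rw [hfinal, hp a]

/-- **Loss-minimizing MLM conditionals are compatible and satisfy conditional
independence.** In the masked-data model, suppose a predictor `f` minimizes the MLM loss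
over all predictors. Then for every `j`, `a ∈ A`, and `x ∈ A^n` with
`P(X_k = x_k for all k < j) > 0`:
(i) `f` evaluated at the unmasked prefix `x_{<j}` with all positions from `j` onward
masked satisfies `f((some x_1,…,some x_{j-1}, none,…,none), j)(a)
  = P(X_j = a | X_k = x_k for all k < j)`; and
(ii) if moreover `P(X_k = x_k for all k ≠ j) > 0`, then `f` evaluated at the context with
only position `j` masked satisfies
`f((some x_1,…,some x_{j-1}, none, some x_{j+1},…,some x_n), j)(a)
  = P(X_j = a | X_k = x_k for all k ≠ j)`,
so the learned single-mask conditionals are exactly the conditional distributions of the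
single joint distribution `P` (hence compatible), and they satisfy the conditional
independence law `p(x_j | x_{<j}, [M]_{j:}) = p(x_j | x_{<j})`. -/
theorem mlm_minimizer_compatible_and_conditionally_independent
    {A : Type*} [Fintype A] [Nonempty A] {n : ℕ} (hn : 1 ≤ n)
    (P : (Fin n → A) → ℝ) (hP0 : ∀ w, 0 ≤ P w) (hP1 : ∑ w : Fin n → A, P w = 1)
    (q : ℝ) (hq0 : 0 < q) (hq1 : q < 1)
    (f : (Fin n → Option A) → Fin n → A → ℝ)
    (hf_pred : ∀ y j, (∀ a, 0 ≤ f y j a) ∧ ∑ a : A, f y j a = 1)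
    (hmin : ∀ g : (Fin n → Option A) → Fin n → A → ℝ,
      (∀ y j, (∀ a, 0 ≤ g y j a) ∧ ∑ a : A, g y j a = 1) →
      mlmLoss (maskedJoint P q) f ≤ mlmLoss (maskedJoint P q) g) :
    ∀ (j : Fin n) (a : A) (x : Fin n → A),
      0 < prFin P {w | ∀ k, k < j → w k = x k} →
      (f (fun k => if k < j then some (x k) else none) j a =
          prFin P {w | w j = a ∧ ∀ k, k < j → w k = x k} /
            prFin P {w | ∀ k, k < j → w k = x k}) ∧
      (0 < prFin P {w | ∀ k, k ≠ j → w k = x k} →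
        f (fun k => if k = j then none else some (x k)) j a =
          prFin P {w | w j = a ∧ ∀ k, k ≠ j → w k = x k} /
            prFin P {w | ∀ k, k ≠ j → w k = x k}) := by
  intro j a x hpre
  have hset1 : {v : Fin n → A | ∀ k (b : A),
        (fun k => if k < j then some (x k) else none) k = some b → v k = b}
      = {v | ∀ k, k < j → v k = x k} := by
    ext v
    simp only [Set.mem_setOf_eq]
    constructor
    · intro h k hk
      exact h k (x k) (if_pos hk)
    · intro h k b hb
      by_cases hk : k < j
      · rw [if_pos hk] at hb
        rw [← Option.some_injective _ hb]
        exact h k hk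
      · rw [if_neg hk] at hb
        cases hb
  have hset1' : {v : Fin n → A | v j = a ∧ ∀ k (b : A),
        (fun k => if k < j then some (x k) else none) k = some b → v k = b}
      = {v | v j = a ∧ ∀ k, k < j → v k = x k} := by
    ext v
    simp only [Set.mem_setOf_eq]
    exact and_congr_right fun _ => (Set.ext_iff.1 hset1 v)
  have hset2 : {v : Fin n → A | ∀ k (b : A),
        (fun k => if k = j then none else some (x k)) k = some b → v k = b}
      = {v | ∀ k, k ≠ j → v k = x k} := by
    ext v
    simp only [Set.mem_setOf_eq]
    constructor
    · intro h k hk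
      exact h k (x k) (if_neg hk)
    · intro h k b hb
      by_cases hk : k = j
      · rw [if_pos hk] at hb
        cases hb
      · rw [if_neg hk] at hb
        rw [← Option.some_injective _ hb]
        exact h k hk
  have hset2' : {v : Fin n → A | v j = a ∧ ∀ k (b : A),
        (fun k => if k = j then none else some (x k)) k = some b → v k = b}
      = {v | v j = a ∧ ∀ k, k ≠ j → v k = x k} := by
    ext v
    simp only [Set.mem_setOf_eq]
    exact and_congr_right fun _ => (Set.ext_iff.1 hset2 v)
  constructor
  · have h1 := key P hP0 q hq0 hq1 f hf_pred hmin j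
      (fun k => if k < j then some (x k) else none)
      (show (if j < j then some (x j) else none) = none from if_neg (lt_irrefl j))
      (by rw [hset1]; exact hpre) a
    rw [hset1, hset1'] at h1
    exact h1
  · intro hpre2
    have h2 := key P hP0 q hq0 hq1 f hf_pred hmin j
      (fun k => if k = j then none else some (x k))
      (show (if j = j then none else some (x j)) = none from if_pos rfl)
      (by rw [hset2]; exact hpre2) a
    rw [hset2, hset2'] at h2
    exact h2
end
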